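/- arXiv:2107.06327 — 3 statements merged into one kernel-verified Lean document; each statement's English description precedes it below -/
import Mathlib

section
/- Let K ≥ 1 and let g_1, …, g_T : {1,…,K} → [0,1] be an arbitrary sequence of reward functions. Let p_1 be the uniform distribution on {1,…,K} and for t ≥ 2 define the Multiplicative Weights distributions p_t[a] = exp(η_t · Σ_{τ=1}^{t−1} g_τ(a)) / Σ_{b=1}^{K} exp(η_t · Σ_{τ=1}^{t−1} g_τ(b)). If the learning rates η_1 ≥ η_2 ≥ … ≥ η_T > 0 form a nonincreasing positive sequence, then for every action a⋆ ∈ {1,…,K}: Σ_{t=1}^T g_t(a⋆) − Σ_{t=1}^T Σ_{a=1}^K p_t[a]·g_t(a) ≤ (log K)/η_T + (Σ_{t=1}^T η_t)/8. -/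
/-!
With `S_t = ∑_{τ < t} g_τ`, consider the potential `Φ_t = η_t⁻¹ log (K⁻¹ ∑_b exp (η_t S_t b))`.
Since one summand is `exp (η S a⋆)`, the final potential is at least `S_T a⋆ - log K / η_T`.
In round `t` the potential grows by `η_t⁻¹ log 𝔼_{p_t} exp (η_t g_t)`, which Hoeffding's lemma
bounds by `𝔼_{p_t} g_t + η_t / 8`; lowering the learning rate from `η_t` to `η_{t+1}` can only
decrease the potential, by the power-mean inequality. Summing over the rounds gives the bound.
-/

open Finset Real ProbabilityTheory MeasureTheory

theorem log_sum_mul_exp_le {ι : Type*} [Fintype ι] {p x : ι → ℝ} (hp : ∀ i, 0 ≤ p i)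
    (hp1 : ∑ i, p i = 1) (hx : ∀ i, x i ∈ Set.Icc (0 : ℝ) 1) (s : ℝ) :
    log (∑ i, p i * exp (s * x i)) ≤ s * ∑ i, p i * x i + s ^ 2 / 8 := by
  -- view `p` as a probability measure on `ι` with the discrete σ-algebra
  let : MeasurableSpace ι := ⊤
  have hP : ∑ i, ENNReal.ofReal (p i) = 1 := by
    rw [← ENNReal.ofReal_sum_of_nonneg fun i _ => hp i, hp1, ENNReal.ofReal_one]
  set μ := (PMF.ofFintype _ hP).toMeasure
  have hμ (f : ι → ℝ) : ∫ i, f i ∂μ = ∑ i, p i * f i := by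
    simp [μ, PMF.integral_eq_sum, ENNReal.toReal_ofReal (hp _)]
  have hoeffding := (hasSubgaussianMGF_of_mem_Icc (μ := μ) (Measurable.of_discrete).aemeasurable
    (ae_of_all _ hx)).mgf_le s
  simp only [mgf, hμ] at hoeffding
  have hsum : ∑ i, p i * exp (s * (x i - ∑ j, p j * x j))
      = exp (-(s * ∑ j, p j * x j)) * ∑ i, p i * exp (s * x i) := by
    rw [mul_sum]
    refine sum_congr rfl fun i _ => ?_
    rw [mul_sub, sub_eq_neg_add, exp_add]
    ring
  have hpos : 0 < ∑ i, p i * exp (s * x i) := by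
    obtain ⟨i, -, hi⟩ := exists_ne_zero_of_sum_ne_zero (hp1.symm ▸ one_ne_zero : ∑ i, p i ≠ 0)
    exact sum_pos' (fun j _ => by have := hp j; positivity)
      ⟨i, mem_univ i, mul_pos ((hp i).lt_of_ne' hi) (exp_pos _)⟩
  rw [hsum, ← le_div_iff₀' (exp_pos _), ← exp_sub] at hoeffding
  rw [log_le_iff_le_exp hpos]
  refine hoeffding.trans_eq (congrArg exp ?_)
  norm_num
  ring

section Potential

variable {ι : Type*} [Fintype ι]

noncomputable def mwWeights (η : ℝ) (S : ι → ℝ) (a : ι) : ℝ :=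
  exp (η * S a) / ∑ b, exp (η * S b)

noncomputable def logMeanExp (η : ℝ) (S : ι → ℝ) : ℝ :=
  log ((∑ b, exp (η * S b)) / Fintype.card ι)

lemma sum_exp_mul_pos [Nonempty ι] (η : ℝ) (S : ι → ℝ) : 0 < ∑ b, exp (η * S b) :=
  sum_pos (fun _ _ => exp_pos _) univ_nonempty

lemma mwWeights_nonneg (η : ℝ) (S : ι → ℝ) (a : ι) : 0 ≤ mwWeights η S a := by
  unfold mwWeights; positivity

lemma sum_mwWeights [Nonempty ι] (η : ℝ) (S : ι → ℝ) : ∑ a, mwWeights η S a = 1 := by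
  simp only [mwWeights, ← sum_div]
  exact div_self (sum_exp_mul_pos η S).ne'

lemma logMeanExp_zero (η : ℝ) : logMeanExp η (0 : ι → ℝ) = 0 := by
  simp [logMeanExp]

lemma logMeanExp_add [Nonempty ι] (η : ℝ) (S x : ι → ℝ) :
    logMeanExp η (S + x) = logMeanExp η S + log (∑ a, mwWeights η S a * exp (η * x a)) := by
  have hS := sum_exp_mul_pos η S
  have hfactor : ∑ b, exp (η * (S + x) b) = (∑ b, exp (η * S b)) *
      ∑ a, mwWeights η S a * exp (η * x a) := by
    simp only [mwWeights, mul_sum, Pi.add_apply, mul_add, exp_add]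
    refine sum_congr rfl fun b _ => ?_
    field_simp
  have hweights : 0 < ∑ a, mwWeights η S a * exp (η * x a) := by
    rw [← mul_pos_iff_of_pos_left hS, ← hfactor]
    exact sum_exp_mul_pos η (S + x)
  rw [logMeanExp, logMeanExp, hfactor, mul_div_right_comm, log_mul (by positivity) hweights.ne']

lemma le_logMeanExp_div {η : ℝ} (hη : 0 < η) (S : ι → ℝ) (a : ι) :
    S a - log (Fintype.card ι) / η ≤ logMeanExp η S / η := by
  have : Nonempty ι := ⟨a⟩
  have hcard : (0 : ℝ) < Fintype.card ι := Nat.cast_pos.2 Fintype.card_pos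
  have hsingle : exp (η * S a) ≤ ∑ b, exp (η * S b) :=
    single_le_sum (f := fun b => exp (η * S b)) (fun _ _ => (exp_pos _).le) (mem_univ a)
  rw [le_div_iff₀ hη, sub_mul, div_mul_cancel₀ _ hη.ne', logMeanExp,
    log_div (sum_exp_mul_pos η S).ne' hcard.ne', mul_comm]
  gcongr
  exact (log_exp _).symm.le.trans (log_le_log (exp_pos _) hsingle)

-- the power-mean inequality between the exponents `η'` and `η`
lemma logMeanExp_div_mono [Nonempty ι] (S : ι → ℝ) {η η' : ℝ} (hη' : 0 < η') (hle : η' ≤ η) :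
    logMeanExp η' S / η' ≤ logMeanExp η S / η := by
  have hη : 0 < η := hη'.trans_le hle
  have hcard : (0 : ℝ) < Fintype.card ι := Nat.cast_pos.2 Fintype.card_pos
  have hq : 1 ≤ η / η' := (one_le_div hη').2 hle
  have hmean : ((∑ b, exp (η' * S b)) / Fintype.card ι) ^ (η / η')
      ≤ (∑ b, exp (η * S b)) / Fintype.card ι := by
    have jensen := rpow_arith_mean_le_arith_mean_rpow univ (fun _ => (Fintype.card ι : ℝ)⁻¹)
      (fun b => exp (η' * S b)) (fun _ _ => by positivity) (by simp [hcard.ne'])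
      (fun b _ => (exp_pos _).le) hq
    simp only [← mul_sum, ← exp_mul] at jensen
    convert jensen using 1
    · rw [div_eq_inv_mul]
    · rw [div_eq_inv_mul]
      congr 2 with b
      congr 1
      field_simp
  have hlog := log_le_log (by positivity) hmean
  rw [log_rpow (by have := sum_exp_mul_pos η' S; positivity)] at hlog
  rw [div_le_div_iff₀ hη' hη]
  calc logMeanExp η' S * η = η / η' * logMeanExp η' S * η' := by field_simp
    _ ≤ logMeanExp η S * η' := by unfold logMeanExp; gcongr

lemma logMeanExp_add_div_le [Nonempty ι] {η : ℝ} (hη : 0 < η) (S : ι → ℝ) {x : ι → ℝ}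
    (hx : ∀ a, x a ∈ Set.Icc (0 : ℝ) 1) :
    logMeanExp η (S + x) / η ≤ logMeanExp η S / η + (∑ a, mwWeights η S a * x a + η / 8) := by
  rw [logMeanExp_add, add_div, add_le_add_iff_left, div_le_iff₀ hη]
  calc _ ≤ η * ∑ a, mwWeights η S a * x a + η ^ 2 / 8 :=
        log_sum_mul_exp_le (mwWeights_nonneg η S) (sum_mwWeights η S) hx η
    _ = _ := by ring

theorem logMeanExp_div_le_sum [Nonempty ι] {g : ℕ → ι → ℝ} {η : ℕ → ℝ} (n : ℕ)
    (hg : ∀ t ≤ n, ∀ a, g t a ∈ Set.Icc (0 : ℝ) 1) (hη_pos : ∀ t ≤ n, 0 < η t)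
    (hη_anti : ∀ t < n, η (t + 1) ≤ η t) :
    logMeanExp (η n) (∑ t ∈ range (n + 1), g t) / η n ≤
      ∑ t ∈ range (n + 1), (∑ a, mwWeights (η t) (∑ τ ∈ range t, g τ) a * g t a + η t / 8) := by
  induction n with
  | zero =>
    simpa [logMeanExp_zero] using logMeanExp_add_div_le (hη_pos 0 le_rfl) 0 (hg 0 le_rfl)
  | succ n ih =>
    set S := ∑ t ∈ range (n + 1), g t
    rw [sum_range_succ _ (n + 1), sum_range_succ _ (n + 1)]
    calc _ ≤ logMeanExp (η (n + 1)) S / η (n + 1)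
          + (∑ a, mwWeights (η (n + 1)) S a * g (n + 1) a + η (n + 1) / 8) :=
          logMeanExp_add_div_le (hη_pos _ le_rfl) S (hg _ le_rfl)
      _ ≤ logMeanExp (η n) S / η n
          + (∑ a, mwWeights (η (n + 1)) S a * g (n + 1) a + η (n + 1) / 8) := by
          grw [logMeanExp_div_mono S (hη_pos _ le_rfl) (hη_anti n n.lt_add_one)]
      _ ≤ _ := by
          gcongr
          exact ih (fun t ht => hg t (by omega)) (fun t ht => hη_pos t (by omega))
            (fun t ht => hη_anti t (by omega))

end Potential

theorem mw_regret_bound_general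
    (K T : ℕ) (hT : 0 < T)
    (g : ℕ → Fin K → ℝ)
    (hg : ∀ t < T, ∀ a : Fin K, g t a ∈ Set.Icc (0 : ℝ) 1)
    (η : ℕ → ℝ)
    (hη_pos : ∀ t < T, 0 < η t)
    (hη_mono : ∀ s t : ℕ, s ≤ t → t < T → η t ≤ η s)
    (p : ℕ → Fin K → ℝ)
    (hp : ∀ t < T, ∀ a : Fin K,
      p t a = Real.exp (η t * ∑ τ ∈ Finset.range t, g τ a) /
        ∑ b : Fin K, Real.exp (η t * ∑ τ ∈ Finset.range t, g τ b))
    (astar : Fin K) :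
    ∑ t ∈ Finset.range T, g t astar
      - ∑ t ∈ Finset.range T, ∑ a : Fin K, p t a * g t a
    ≤ Real.log K / η (T - 1) + (∑ t ∈ Finset.range T, η t) / 8 := by
  obtain ⟨n, rfl⟩ : ∃ n, T = n + 1 := ⟨T - 1, by omega⟩
  have : Nonempty (Fin K) := ⟨astar⟩
  have hpot := logMeanExp_div_le_sum n (fun t ht => hg t (by omega))
    (fun t ht => hη_pos t (by omega)) (fun t ht => hη_mono t (t + 1) (by omega) (by omega))
  have hlow := le_logMeanExp_div (hη_pos n n.lt_add_one) (∑ t ∈ range (n + 1), g t) astar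
  have hgain : ∑ t ∈ range (n + 1), ∑ a, p t a * g t a
      = ∑ t ∈ range (n + 1), ∑ a, mwWeights (η t) (∑ τ ∈ range t, g τ) a * g t a :=
    sum_congr rfl fun t ht => by simp [hp t (mem_range.1 ht), mwWeights, Finset.sum_apply]
  rw [sum_add_distrib, ← sum_div] at hpot
  simp only [Fintype.card_fin, Finset.sum_apply, Nat.add_sub_cancel] at hlow ⊢
  linarith

/-- **Multiplicative Weights regret bound with nonincreasing learning rates.**
Given `K ≥ 1` actions and reward functions `g 0, …, g (T-1) : Fin K → [0,1]`,
let `p t` be the Multiplicative Weights distribution at round `t`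
(indexed from `0`, so that `p 0` is the uniform distribution), i.e.
`p t a = exp (η t * ∑_{τ < t} g τ a) / ∑_b exp (η t * ∑_{τ < t} g τ b)`.
If the learning rates `η 0 ≥ η 1 ≥ ⋯ ≥ η (T-1) > 0` are nonincreasing and positive,
then for every action `a⋆`,
`∑_t g t a⋆ − ∑_t ∑_a p t a * g t a ≤ log K / η (T-1) + (∑_t η t) / 8`. -/
theorem mw_regret_bound
    (K T : ℕ) (hK : 1 ≤ K) (hT : 0 < T)
    (g : ℕ → Fin K → ℝ)
    (hg : ∀ t < T, ∀ a : Fin K, g t a ∈ Set.Icc (0 : ℝ) 1)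
    (η : ℕ → ℝ)
    (hη_pos : ∀ t < T, 0 < η t)
    (hη_mono : ∀ s t : ℕ, s ≤ t → t < T → η t ≤ η s)
    (p : ℕ → Fin K → ℝ)
    (hp : ∀ t < T, ∀ a : Fin K,
      p t a = Real.exp (η t * ∑ τ ∈ Finset.range t, g τ a) /
        ∑ b : Fin K, Real.exp (η t * ∑ τ ∈ Finset.range t, g τ b))
    (astar : Fin K) :
    ∑ t ∈ Finset.range T, g t astar
      - ∑ t ∈ Finset.range T, ∑ a : Fin K, p t a * g t a
    ≤ Real.log K / η (T - 1) + (∑ t ∈ Finset.range T, η t) / 8 :=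
  mw_regret_bound_general K T hT g hg η hη_pos hη_mono p hp astar
end

section
/- (Finite-time approximation of contextual coarse correlated equilibria.) Consider a contextual game with N players played for T rounds with contexts z_1, …, z_T and joint actions a_1, …, a_T, and let R^i_c(T) denote the contextual regret of player i. Let ρ_T be the empirical policy of this play. Then ρ_T is an ε-contextual coarse correlated equilibrium (ε-c-CCE) of the played contextual game with ε ≤ max_{i ∈ {1,…,N}} R^i_c(T)/T; that is, for every player i and every policy π : Z → A^i: (1/T)·Σ_{t=1}^T E_{a ∼ ρ_T(z_t)}[ r^i(a, z_t) ] ≥ (1/T)·Σ_{t=1}^T E_{a ∼ ρ_T(z_t)}[ r^i(π(z_t), a^{−i}, z_t) ] − max_{j} R^j_c(T)/T. -/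
open Finset

lemma empirical_sum_eq {Z : Type*} [DecidableEq Z] {B : Type*} [Fintype B] [DecidableEq B]
    (T : ℕ) (z : ℕ → Z) (a : ℕ → B) (f : B → Z → ℝ)
    (ρ : Z → B → ℝ)
    (hρ : ∀ t < T, ∀ b, ρ (z t) b =
      (((Finset.range T).filter (fun s => z s = z t ∧ a s = b)).card : ℝ) /
        (((Finset.range T).filter (fun s => z s = z t)).card : ℝ)) :
    ∑ t ∈ Finset.range T, ∑ b : B, ρ (z t) b * f b (z t)
      = ∑ t ∈ Finset.range T, f (a t) (z t) := by
  have hstep : ∀ t ∈ Finset.range T,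
      ∑ b : B, ρ (z t) b * f b (z t)
        = ∑ s ∈ Finset.range T, (if z s = z t then
            f (a s) (z s) / (((Finset.range T).filter (fun u => z u = z s)).card : ℝ)
          else 0) := by
    intro t ht
    rw [Finset.mem_range] at ht
    have h1 : ∑ b : B, ρ (z t) b * f b (z t)
        = ∑ b : B, ∑ s ∈ (Finset.range T).filter (fun s => z s = z t),
            (if a s = b then f b (z t) /
              (((Finset.range T).filter (fun u => z u = z t)).card : ℝ) else 0) := by
      refine Finset.sum_congr rfl fun b _ => ?_
      rw [hρ t ht b, ← Finset.filter_filter, Finset.card_filter]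
      push_cast
      rw [Finset.sum_div, Finset.sum_mul]
      refine Finset.sum_congr rfl fun s _ => ?_
      split_ifs with h <;> simp [div_mul_eq_mul_div, div_eq_inv_mul]
    rw [h1, Finset.sum_comm]
    rw [Finset.sum_filter]
    refine Finset.sum_congr rfl fun s _ => ?_
    split_ifs with h
    · rw [Finset.sum_ite_eq Finset.univ (a s)]
      simp only [Finset.mem_univ, if_true]
      rw [h]
    · rfl
  rw [Finset.sum_congr rfl hstep, Finset.sum_comm]
  refine Finset.sum_congr rfl fun s hs => ?_
  have : ∀ t ∈ Finset.range T, (if z s = z t then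
      f (a s) (z s) / (((Finset.range T).filter (fun u => z u = z s)).card : ℝ) else 0)
      = (if z t = z s then
      f (a s) (z s) / (((Finset.range T).filter (fun u => z u = z s)).card : ℝ) else 0) := by
    intro t _; simp [eq_comm]
  rw [Finset.sum_congr rfl this, ← Finset.sum_filter, Finset.sum_const, nsmul_eq_mul]
  have hmem : s ∈ (Finset.range T).filter (fun u => z u = z s) := by
    simp [Finset.mem_range.mp hs]
  have hpos : (0:ℝ) < (((Finset.range T).filter (fun u => z u = z s)).card : ℝ) := by
    exact_mod_cast Finset.card_pos.mpr ⟨s, hmem⟩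
  field_simp

/-- **Finite-time approximation of contextual coarse correlated equilibria.**
Consider a contextual game with players `ι`, action sets `A i`, context set `Z`,
and rewards `r i : (Π j, A j) → Z → [0,1]`, played for `T` rounds with contexts
`z 0, …, z (T-1)` and joint actions `a 0, …, a (T-1)`. Suppose `R i` bounds the
contextual regret of player `i`, i.e. for every policy `π : Z → A i`,
`∑_t r i (π (z t), a t ^{-i}) (z t) − ∑_t r i (a t) (z t) ≤ R i`.
Let `ρ` be the empirical policy of the play (on each observed context, the
empirical distribution of the joint actions played when that context was
revealed). Then `ρ` is an `ε`-contextual coarse correlated equilibrium with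
`ε ≤ max_i R i / T`: for every player `i` and every policy `π : Z → A i`,
`(1/T) ∑_t E_{a ∼ ρ(z t)} [r i a (z t)]
  ≥ (1/T) ∑_t E_{a ∼ ρ(z t)} [r i (π (z t), a^{-i}) (z t)] − max_j R j / T`. -/
theorem empirical_policy_approx_cCCE
    {ι : Type*} [Fintype ι] [Nonempty ι] [DecidableEq ι]
    {A : ι → Type*} [∀ i, Fintype (A i)] [∀ i, DecidableEq (A i)]
    {Z : Type*} [DecidableEq Z]
    (T : ℕ) (hT : 0 < T)
    (z : ℕ → Z) (a : ℕ → ∀ j, A j)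
    (r : ι → (∀ j, A j) → Z → ℝ)
    (hr : ∀ i b x, r i b x ∈ Set.Icc (0 : ℝ) 1)
    (R : ι → ℝ)
    (hR : ∀ i, ∀ π : Z → A i,
      ∑ t ∈ Finset.range T, r i (Function.update (a t) i (π (z t))) (z t)
        - ∑ t ∈ Finset.range T, r i (a t) (z t) ≤ R i)
    (ρ : Z → (∀ j, A j) → ℝ)
    (hρ : ∀ t < T, ∀ b : ∀ j, A j,
      ρ (z t) b =
        (((Finset.range T).filter (fun s => z s = z t ∧ a s = b)).card : ℝ) /
          (((Finset.range T).filter (fun s => z s = z t)).card : ℝ)) :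
    ∀ i, ∀ π : Z → A i,
      (1 / (T : ℝ)) * ∑ t ∈ Finset.range T, ∑ b : ∀ j, A j, ρ (z t) b * r i b (z t)
        ≥ (1 / (T : ℝ)) * ∑ t ∈ Finset.range T,
            ∑ b : ∀ j, A j, ρ (z t) b * r i (Function.update b i (π (z t))) (z t)
          - (Finset.univ.sup' Finset.univ_nonempty R) / T := by
  intro i π
  have h1 := empirical_sum_eq T z a (fun b x => r i b x) ρ hρ
  have h2 := empirical_sum_eq T z a (fun b x => r i (Function.update b i (π x)) x) ρ hρ
  rw [h1, h2]
  have hRi := hR i π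
  have hsup : R i ≤ Finset.univ.sup' Finset.univ_nonempty R :=
    Finset.le_sup' R (Finset.mem_univ i)
  have hTpos : (0:ℝ) < T := by exact_mod_cast hT
  rw [ge_iff_le, sub_le_iff_le_add]
  have key : 1 / (T:ℝ) * ∑ t ∈ Finset.range T, r i (Function.update (a t) i (π (z t))) (z t)
      - 1 / (T:ℝ) * ∑ t ∈ Finset.range T, r i (a t) (z t)
      ≤ 1 / (T:ℝ) * (Finset.univ.sup' Finset.univ_nonempty R) := by
    rw [← mul_sub]
    exact mul_le_mul_of_nonneg_left (hRi.trans hsup) (by positivity)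
  have hdiv : (Finset.univ.sup' Finset.univ_nonempty R) / (T:ℝ)
      = 1 / (T:ℝ) * (Finset.univ.sup' Finset.univ_nonempty R) := by ring
  linarith
end

section
/- (Convergence to approximate efficiency in smooth contextual games.) Consider a contextual game with N players played for T rounds with contexts z_1, …, z_T and joint actions a_1, …, a_T, and let R^i_c(T) denote the contextual regret of player i. Let Γ : A × Z → ℝ be a social welfare function with Γ(a,z) ≥ 0 and Γ(a,z) ≥ Σ_{i=1}^N r^i(a,z) for all (a,z). Assume that for each round t the game is (λ(z_t), μ(z_t))-smooth with λ(z_t) ≥ 0, μ(z_t) ≥ 0, i.e., for all joint actions a_1', a_2' ∈ A: Σ_{i=1}^N r^i(a_2'^i, a_1'^{−i}, z_t) ≥ λ(z_t)·Γ(a_2', z_t) − μ(z_t)·Γ(a_1', z_t). Let λ̄ = min_{t∈{1,…,T}} λ(z_t) and μ̄ = max_{t∈{1,…,T}} μ(z_t) be the worst-case smoothness constants, and let OPT = sup over policy profiles (π^1,…,π^N), π^i : Z → A^i, of (1/T)Σ_{t=1}^T Γ(π^1(z_t),…,π^N(z_t), z_t). Then: (1/T)·Σ_{t=1}^T Γ(a_t,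 z_t) ≥ (λ̄/(1+μ̄))·OPT − (1/(1+μ̄))·Σ_{i=1}^N R^i_c(T)/T. -/
open Finset

/-- **Convergence to approximate efficiency in smooth contextual games.**
Consider a contextual game with players `ι`, finite nonempty action sets `A i`,
context set `Z`, rewards `r i : (Π j, A j) → Z → [0,1]`, played for `T` rounds
with contexts `z 0, …, z (T-1)` and joint actions `a 0, …, a (T-1)`, and let
`R i` bound the contextual regret of player `i`. Let `Γ` be a social welfare
function with `Γ ≥ 0` and `Γ(b, x) ≥ ∑_i r i b x`, and suppose the game is
`(lam (z t), mu (z t))`-smooth at every round `t` with nonnegative smoothness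
constants. Let `lamBar = min_t lam (z t)` and `muBar = max_t mu (z t)`, and let
`OPT` be the optimal contextual welfare, i.e. the supremum over policy profiles
`π i : Z → A i` of `(1/T) ∑_t Γ(π 1 (z t), …, π N (z t), z t)`. Then
`(1/T) ∑_t Γ(a t, z t) ≥ (lamBar/(1+muBar)) * OPT − (1/(1+muBar)) ∑_i R i / T`. -/
theorem smooth_contextual_game_efficiency
    {ι : Type*} [Fintype ι] [Nonempty ι] [DecidableEq ι]
    {A : ι → Type*} [∀ i, Fintype (A i)] [∀ i, Nonempty (A i)]
    {Z : Type*}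
    (T : ℕ) (hT : 0 < T)
    (z : ℕ → Z) (a : ℕ → ∀ j, A j)
    (r : ι → (∀ j, A j) → Z → ℝ)
    (hr : ∀ i b x, r i b x ∈ Set.Icc (0 : ℝ) 1)
    (R : ι → ℝ)
    (hR : ∀ i, ∀ π : Z → A i,
      ∑ t ∈ Finset.range T, r i (Function.update (a t) i (π (z t))) (z t)
        - ∑ t ∈ Finset.range T, r i (a t) (z t) ≤ R i)
    (Γ : (∀ j, A j) → Z → ℝ)
    (hΓ_nonneg : ∀ b x, 0 ≤ Γ b x)
    (hΓ_welfare : ∀ b x, (∑ i, r i b x) ≤ Γ b x)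
    (lam mu : Z → ℝ)
    (h_nonneg : ∀ t < T, 0 ≤ lam (z t) ∧ 0 ≤ mu (z t))
    (h_smooth : ∀ t < T, ∀ a1 a2 : ∀ j, A j,
      (∑ i, r i (Function.update a1 i (a2 i)) (z t))
        ≥ lam (z t) * Γ a2 (z t) - mu (z t) * Γ a1 (z t))
    (lamBar muBar : ℝ)
    (hlamBar : IsLeast {x : ℝ | ∃ t < T, x = lam (z t)} lamBar)
    (hmuBar : IsGreatest {x : ℝ | ∃ t < T, x = mu (z t)} muBar)
    (OPT : ℝ)
    (hOPT : OPT = ⨆ π : ∀ i, Z → A i,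
      (1 / (T : ℝ)) * ∑ t ∈ Finset.range T, Γ (fun i => π i (z t)) (z t)) :
    (1 / (T : ℝ)) * ∑ t ∈ Finset.range T, Γ (a t) (z t)
      ≥ (lamBar / (1 + muBar)) * OPT
        - (1 / (1 + muBar)) * ∑ i, R i / T := by
  obtain ⟨tl, htl, hle⟩ := hlamBar.1
  obtain ⟨tm, htm, hme⟩ := hmuBar.1
  have hlam0 : 0 ≤ lamBar := hle ▸ (h_nonneg tl htl).1
  have hmu0 : 0 ≤ muBar := hme ▸ (h_nonneg tm htm).2
  have hc : (0:ℝ) < 1 + muBar := by linarith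
  have hTpos : (0:ℝ) < T := by exact_mod_cast hT
  set S := ∑ t ∈ Finset.range T, Γ (a t) (z t) with hS
  have hSnn : 0 ≤ S := Finset.sum_nonneg fun t _ => hΓ_nonneg _ _
  -- key bound for each policy profile
  have hkey : ∀ π : ∀ i, Z → A i,
      lamBar * ((1 / (T : ℝ)) * ∑ t ∈ Finset.range T, Γ (fun i => π i (z t)) (z t))
        ≤ (1 + muBar) * ((1 / (T : ℝ)) * S) + (∑ i, R i) / T := by
    intro π
    have step1 : ∑ t ∈ Finset.range T, (lamBar * Γ (fun i => π i (z t)) (z t))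
        ≤ ∑ t ∈ Finset.range T,
          ((∑ i, r i (Function.update (a t) i (π i (z t))) (z t)) + muBar * Γ (a t) (z t)) := by
      apply Finset.sum_le_sum
      intro t ht
      have ht' := Finset.mem_range.mp ht
      have hs := h_smooth t ht' (a t) (fun i => π i (z t))
      have h1 : lamBar * Γ (fun i => π i (z t)) (z t) ≤ lam (z t) * Γ (fun i => π i (z t)) (z t) :=
        mul_le_mul_of_nonneg_right (hlamBar.2 ⟨t, ht', rfl⟩) (hΓ_nonneg _ _)
      have h2 : mu (z t) * Γ (a t) (z t) ≤ muBar * Γ (a t) (z t) :=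
        mul_le_mul_of_nonneg_right (hmuBar.2 ⟨t, ht', rfl⟩) (hΓ_nonneg _ _)
      linarith
    have step2 : ∑ t ∈ Finset.range T, ∑ i, r i (Function.update (a t) i (π i (z t))) (z t)
        ≤ S + ∑ i, R i := by
      rw [Finset.sum_comm]
      calc ∑ i, ∑ t ∈ Finset.range T, r i (Function.update (a t) i (π i (z t))) (z t)
          ≤ ∑ i, ((∑ t ∈ Finset.range T, r i (a t) (z t)) + R i) := by
            apply Finset.sum_le_sum
            intro i _
            have := hR i (fun x => π i x)
            linarith
        _ = (∑ t ∈ Finset.range T, ∑ i, r i (a t) (z t)) + ∑ i, R i := by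
            rw [Finset.sum_add_distrib, Finset.sum_comm]
        _ ≤ S + ∑ i, R i := by
            have : ∑ t ∈ Finset.range T, ∑ i, r i (a t) (z t) ≤ S :=
              Finset.sum_le_sum fun t _ => hΓ_welfare _ _
            linarith
    have step3 : lamBar * ∑ t ∈ Finset.range T, Γ (fun i => π i (z t)) (z t)
        ≤ (1 + muBar) * S + ∑ i, R i := by
      rw [Finset.mul_sum]
      have : ∑ t ∈ Finset.range T,
          ((∑ i, r i (Function.update (a t) i (π i (z t))) (z t)) + muBar * Γ (a t) (z t))
          = (∑ t ∈ Finset.range T, ∑ i, r i (Function.update (a t) i (π i (z t))) (z t))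
            + muBar * S := by
        rw [Finset.sum_add_distrib, ← Finset.mul_sum]
      nlinarith [step1, step2]
    have hT1 : (0:ℝ) ≤ 1 / (T:ℝ) := by positivity
    calc lamBar * ((1 / (T : ℝ)) * ∑ t ∈ Finset.range T, Γ (fun i => π i (z t)) (z t))
        = (1 / (T:ℝ)) * (lamBar * ∑ t ∈ Finset.range T, Γ (fun i => π i (z t)) (z t)) := by ring
      _ ≤ (1 / (T:ℝ)) * ((1 + muBar) * S + ∑ i, R i) := by
          exact mul_le_mul_of_nonneg_left step3 hT1
      _ = (1 + muBar) * ((1 / (T : ℝ)) * S) + (∑ i, R i) / T := by ring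
  have hOPTle : lamBar * OPT ≤ (1 + muBar) * ((1 / (T : ℝ)) * S) + (∑ i, R i) / T := by
    rw [hOPT, Real.mul_iSup_of_nonneg hlam0]
    exact ciSup_le hkey
  have hsum : ∑ i, R i / (T:ℝ) = (∑ i, R i) / T := (Finset.sum_div _ _ _).symm
  rw [ge_iff_le, hsum, sub_le_iff_le_add, div_mul_eq_mul_div, div_le_iff₀ hc]
  have hexp : (1 / (T:ℝ) * S + 1 / (1 + muBar) * ((∑ i, R i) / T)) * (1 + muBar)
      = (1 + muBar) * (1 / (T:ℝ) * S) + (∑ i, R i) / T := by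
    field_simp
  rw [hexp]
  exact hOPTle
end
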